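/- arXiv:1505.01731 — 7 statements merged into one kernel-verified Lean document; each statement's English description precedes it below -/
import Mathlib

section
/- Let k ≥ 1 be an integer and let G = (V, E) be a finite simple graph with matching(G) ≤ k. Let U = {v ∈ V : deg_G(v) ≥ 10k} and let F be the set of edges of G both of whose endpoints lie outside U. Let G' = (V, E') be a spanning subgraph of G (E' ⊆ E) such that F ⊆ E' and deg_{G'}(u) ≥ 5k for every u ∈ U. Then matching(G') = matching(G) and vc(G') = vc(G). -/
/-- `M` is a matching of the graph `G`: a finite set of edges of `G`
that are pairwise vertex-disjoint. -/
def IsMatchingSet {V : Type*} (G : SimpleGraph V) (M : Finset (Sym2 V)) : Prop :=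
  (↑M : Set (Sym2 V)) ⊆ G.edgeSet ∧
    ∀ e ∈ M, ∀ f ∈ M, e ≠ f → ∀ v : V, v ∈ e → v ∉ f

/-- The maximum size of a matching of `G`. -/
noncomputable def matchNum {V : Type*} (G : SimpleGraph V) : ℕ :=
  sSup {n | ∃ M : Finset (Sym2 V), IsMatchingSet G M ∧ M.card = n}

/-- `W` is a vertex cover of `G`: every edge has an endpoint in `W`. -/
def IsVertexCover {V : Type*} (G : SimpleGraph V) (W : Finset V) : Prop :=
  ∀ e ∈ G.edgeSet, ∃ v ∈ W, v ∈ e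

/-- The minimum size of a vertex cover of `G`. -/
noncomputable def vcNum {V : Type*} (G : SimpleGraph V) : ℕ :=
  sInf {n | ∃ W : Finset V, IsVertexCover G W ∧ W.card = n}

/-!
Every edge of `G` missing from `G'` has an endpoint `u` with `deg_{G'} u ≥ 5k`, more than the at
most `2k` vertices covered by a matching of size `≤ k`. So such an edge of a maximum matching can
be traded for a `G'`-edge from `u` to an uncovered vertex, and repeating this turns a maximum
matching of `G` into one of `G'`. Dually, the vertices of a maximum matching of `G'` cover `G'`,
so `vc(G') ≤ 2k`; a minimum cover of `G'` must then contain every such `u` (else it would contain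
all of its `≥ 5k` neighbours), hence it also covers the edges of `G` missing from `G'`.
-/

open Finset

section Matching

variable {V : Type*} {G G' : SimpleGraph V} {M : Finset (Sym2 V)}

lemma IsMatchingSet.mono (hle : G' ≤ G) (hM : IsMatchingSet G' M) : IsMatchingSet G M :=
  ⟨hM.1.trans (SimpleGraph.edgeSet_mono hle), hM.2⟩

lemma IsMatchingSet.subset {N : Finset (Sym2 V)} (hM : IsMatchingSet G M) (hN : N ⊆ M) :
    IsMatchingSet G N :=
  ⟨(coe_subset.2 hN).trans hM.1, fun e he f hf => hM.2 e (hN he) f (hN hf)⟩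

variable [DecidableEq V]

def matchedVerts (M : Finset (Sym2 V)) : Finset V := M.biUnion Sym2.toFinset

lemma mem_matchedVerts {v : V} : v ∈ matchedVerts M ↔ ∃ e ∈ M, v ∈ e := by
  simp [matchedVerts, Sym2.mem_toFinset]

lemma card_matchedVerts_le (M : Finset (Sym2 V)) : #(matchedVerts M) ≤ 2 * #M :=
  calc #(matchedVerts M) ≤ ∑ e ∈ M, #e.toFinset := card_biUnion_le
    _ ≤ ∑ _e ∈ M, 2 := sum_le_sum fun e _ => by rw [Sym2.card_toFinset]; split_ifs <;> omega
    _ = 2 * #M := by rw [sum_const, smul_eq_mul, mul_comm]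

lemma IsMatchingSet.insert_edge {e : Sym2 V} (hM : IsMatchingSet G M) (he : e ∈ G.edgeSet)
    (hfree : ∀ v ∈ e, v ∉ matchedVerts M) : IsMatchingSet G (insert e M) := by
  have hfree' : ∀ v ∈ e, ∀ f ∈ M, v ∉ f := fun v hv f hf hvf =>
    hfree v hv (mem_matchedVerts.2 ⟨f, hf, hvf⟩)
  refine ⟨by simpa [Set.insert_subset_iff] using ⟨he, hM.1⟩, ?_⟩
  intro a ha b hb hab v hva
  rcases mem_insert.1 ha with rfl | haM <;> rcases mem_insert.1 hb with rfl | hbM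
  · exact absurd rfl hab
  · exact hfree' v hva b hbM
  · exact fun hvb => hfree' v hvb a haM hva
  · exact hM.2 a haM b hbM hab v hva

lemma IsMatchingSet.exchange {e : Sym2 V} {u w : V} (hM : IsMatchingSet G M) (he : e ∈ M)
    (hu : u ∈ e) (hadj : G.Adj u w) (hw : w ∉ matchedVerts M) :
    IsMatchingSet G (insert s(u, w) (M.erase e)) ∧ #(insert s(u, w) (M.erase e)) = #M := by
  have hfree : ∀ v ∈ s(u, w), v ∉ matchedVerts (M.erase e) := by
    intro v hv hvM
    obtain ⟨f, hf, hvf⟩ := mem_matchedVerts.1 hvM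
    rcases Sym2.mem_iff.1 hv with rfl | rfl
    · exact hM.2 e he f (mem_of_mem_erase hf) (ne_of_mem_erase hf).symm v hu hvf
    · exact hw (mem_matchedVerts.2 ⟨f, mem_of_mem_erase hf, hvf⟩)
  refine ⟨(hM.subset (erase_subset e M)).insert_edge hadj hfree, ?_⟩
  have hnew : s(u, w) ∉ M.erase e := fun h =>
    hfree u (Sym2.mem_mk_left u w) (mem_matchedVerts.2 ⟨_, h, Sym2.mem_mk_left u w⟩)
  rw [card_insert_of_notMem hnew, card_erase_add_one he]

end Matching

section Numbers

variable {V : Type*} {G G' : SimpleGraph V}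

lemma IsVertexCover.anti {W : Finset V} (hle : G' ≤ G) (hW : IsVertexCover G W) :
    IsVertexCover G' W :=
  fun e he => hW e (SimpleGraph.edgeSet_mono hle he)

lemma IsVertexCover.vcNum_le {W : Finset V} (hW : IsVertexCover G W) : vcNum G ≤ #W :=
  Nat.sInf_le ⟨W, hW, rfl⟩

variable [Fintype V]

lemma bddAbove_matchingCards (G : SimpleGraph V) :
    BddAbove {n | ∃ M : Finset (Sym2 V), IsMatchingSet G M ∧ #M = n} :=
  ⟨Fintype.card (Sym2 V), fun _ ⟨N, _, hN⟩ => hN ▸ card_le_univ N⟩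

lemma IsMatchingSet.card_le_matchNum {M : Finset (Sym2 V)} (hM : IsMatchingSet G M) :
    #M ≤ matchNum G :=
  le_csSup (bddAbove_matchingCards G) ⟨M, hM, rfl⟩

lemma exists_isMatchingSet_card_eq_matchNum (G : SimpleGraph V) :
    ∃ M : Finset (Sym2 V), IsMatchingSet G M ∧ #M = matchNum G :=
  Nat.sSup_mem (s := {n | ∃ M : Finset (Sym2 V), IsMatchingSet G M ∧ #M = n})
    ⟨0, ∅, ⟨by simp, by simp⟩, rfl⟩ (bddAbove_matchingCards G)

lemma matchNum_mono (hle : G' ≤ G) : matchNum G' ≤ matchNum G := by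
  obtain ⟨M, hM, hcard⟩ := exists_isMatchingSet_card_eq_matchNum G'
  exact hcard ▸ (hM.mono hle).card_le_matchNum

lemma exists_isVertexCover_card_eq_vcNum (G : SimpleGraph V) :
    ∃ W : Finset V, IsVertexCover G W ∧ #W = vcNum G :=
  Nat.sInf_mem (s := {n | ∃ W : Finset V, IsVertexCover G W ∧ #W = n})
    ⟨_, univ, fun e _ => ⟨e.out.1, mem_univ _, Sym2.out_fst_mem e⟩, rfl⟩

lemma vcNum_mono (hle : G' ≤ G) : vcNum G' ≤ vcNum G := by
  obtain ⟨W, hW, hcard⟩ := exists_isVertexCover_card_eq_vcNum G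
  exact hcard ▸ (hW.anti hle).vcNum_le

variable [DecidableEq V]

/-- An uncovered edge could be added to a maximum matching. -/
lemma isVertexCover_matchedVerts {M : Finset (Sym2 V)} (hM : IsMatchingSet G M)
    (hmax : #M = matchNum G) : IsVertexCover G (matchedVerts M) := by
  intro e he
  by_contra! hcov
  have hfree : ∀ v ∈ e, v ∉ matchedVerts M := fun v hv hvM => hcov v hvM hv
  have heM : e ∉ M := fun heM =>
    hfree _ (Sym2.out_fst_mem e) (mem_matchedVerts.2 ⟨e, heM, Sym2.out_fst_mem e⟩)
  have := (hM.insert_edge he hfree).card_le_matchNum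
  rw [card_insert_of_notMem heM] at this
  omega

lemma vcNum_le_two_mul_matchNum (G : SimpleGraph V) : vcNum G ≤ 2 * matchNum G := by
  obtain ⟨M, hM, hcard⟩ := exists_isMatchingSet_card_eq_matchNum G
  exact (isVertexCover_matchedVerts hM hcard).vcNum_le.trans (hcard ▸ card_matchedVerts_le M)

end Numbers

section Exchange

variable {V : Type*} [Fintype V] {G G' : SimpleGraph V} [DecidableRel G'.Adj]

lemma IsVertexCover.mem_of_card_lt_degree {W : Finset V} (hW : IsVertexCover G' W) {u : V}
    (hdeg : #W < G'.degree u) : u ∈ W := by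
  by_contra hu
  have hnbrs : G'.neighborFinset u ⊆ W := by
    intro w hw
    obtain ⟨v, hv, hve⟩ := hW s(u, w) ((G'.mem_neighborFinset u w).1 hw)
    rcases Sym2.mem_iff.1 hve with rfl | rfl
    exacts [absurd hv hu, hv]
  have := card_le_card hnbrs
  rw [G'.card_neighborFinset_eq_degree] at this
  omega

lemma IsVertexCover.of_le {W : Finset V} (hW : IsVertexCover G' W)
    (hheavy : ∀ e ∈ G.edgeSet, e ∉ G'.edgeSet → ∃ u ∈ e, #W < G'.degree u) :
    IsVertexCover G W := by
  intro e he
  by_cases he' : e ∈ G'.edgeSet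
  · exact hW e he'
  · obtain ⟨u, hu, hdeg⟩ := hheavy e he he'
    exact ⟨u, hW.mem_of_card_lt_degree hdeg, hu⟩

variable [DecidableEq V]

/-- Induction on the number of edges of `M` outside `G'`, each exchange removing one. -/
lemma exists_isMatchingSet_of_le (m : ℕ) (hle : G' ≤ G)
    (hheavy : ∀ e ∈ G.edgeSet, e ∉ G'.edgeSet → ∃ u ∈ e, 2 * m < G'.degree u)
    {M : Finset (Sym2 V)} (hM : IsMatchingSet G M) (hcard : #M ≤ m) :
    ∃ M' : Finset (Sym2 V), IsMatchingSet G' M' ∧ #M' = #M := by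
  induction hn : #(M.filter (· ∉ G'.edgeSet)) using Nat.strong_induction_on generalizing M with
  | _ n ih =>
  by_cases hbad : ∃ e ∈ M, e ∉ G'.edgeSet
  · obtain ⟨e, heM, he'⟩ := hbad
    obtain ⟨u, hu, hdeg⟩ := hheavy e (hM.1 heM) he'
    obtain ⟨w, hw, hwM⟩ := exists_mem_notMem_of_card_lt_card (s := matchedVerts M)
      (t := G'.neighborFinset u) (by
        rw [G'.card_neighborFinset_eq_degree]
        linarith [card_matchedVerts_le M])
    have hadj : G'.Adj u w := (G'.mem_neighborFinset u w).1 hw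
    obtain ⟨hM', hcard'⟩ := hM.exchange heM hu (hle hadj) hwM
    have hnew : s(u, w) ∈ G'.edgeSet := hadj
    have hfewer : #((insert s(u, w) (M.erase e)).filter (· ∉ G'.edgeSet)) < n := by
      rw [← hn, filter_insert, if_neg (not_not.2 hnew), filter_erase]
      exact card_erase_lt_of_mem (mem_filter.2 ⟨heM, he'⟩)
    obtain ⟨M'', hM'', hcard''⟩ := ih _ hfewer hM' (hcard' ▸ hcard) rfl
    exact ⟨M'', hM'', hcard''.trans hcard'⟩
  · exact ⟨M, ⟨fun e he => not_not.1 fun he' => hbad ⟨e, he, he'⟩, hM.2⟩, rfl⟩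

end Exchange

theorem stmt_2 {V : Type*} [Fintype V] [DecidableEq V]
    (k : ℕ) (hk : 1 ≤ k)
    (G G' : SimpleGraph V) [DecidableRel G.Adj] [DecidableRel G'.Adj]
    (hsub : G' ≤ G)
    (hmatch : matchNum G ≤ k)
    (hF : ∀ e ∈ G.edgeSet, (∀ v ∈ e, G.degree v < 10 * k) → e ∈ G'.edgeSet)
    (hU : ∀ u : V, 10 * k ≤ G.degree u → 5 * k ≤ G'.degree u) :
    matchNum G' = matchNum G ∧ vcNum G' = vcNum G := by
  have hheavy : ∀ e ∈ G.edgeSet, e ∉ G'.edgeSet → ∃ u ∈ e, 2 * k < G'.degree u := by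
    intro e he he'
    obtain ⟨u, hu, hdeg⟩ : ∃ u ∈ e, 10 * k ≤ G.degree u := by
      by_contra! hlight
      exact he' (hF e he hlight)
    exact ⟨u, hu, by have := hU u hdeg; omega⟩
  have hmatchNum : matchNum G' = matchNum G := by
    refine le_antisymm (matchNum_mono hsub) ?_
    obtain ⟨M, hM, hcard⟩ := exists_isMatchingSet_card_eq_matchNum G
    obtain ⟨M', hM', hcard'⟩ := exists_isMatchingSet_of_le k hsub hheavy hM (hcard ▸ hmatch)
    exact hcard ▸ hcard' ▸ hM'.card_le_matchNum
  refine ⟨hmatchNum, le_antisymm (vcNum_mono hsub) ?_⟩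
  obtain ⟨W, hW, hcard⟩ := exists_isVertexCover_card_eq_vcNum G'
  have hsmall : #W ≤ 2 * k := by
    have := vcNum_le_two_mul_matchNum G'
    omega
  refine hcard ▸ (hW.of_le fun e he he' => ?_).vcNum_le
  obtain ⟨u, hu, hdeg⟩ := hheavy e he he'
  exact ⟨u, hu, by omega⟩
end

section
/- Let k ≥ 1 be an integer and let G = (V, E) be a finite simple graph with matching(G) ≤ k. Let U = {v ∈ V : deg_G(v) ≥ 10k} and let F be the set of edges of G both of whose endpoints lie outside U. Then |U| ≤ 2k and |F| ≤ 20k². -/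
/-!
The vertices covered by a maximum matching form a vertex cover `W` with `|W| ≤ 2k`: an edge
avoiding them could be added to the matching. A vertex outside `W` has all its neighbours in `W`,
so its degree is at most `2k < 10k`; hence every vertex of degree `≥ 10k` lies in `W`. Every edge
with both endpoints of degree `< 10k` is incident to one of the at most `2k` low-degree vertices
of `W`, each of which lies on fewer than `10k` edges.
-/

open scoped Classical

open Finset SimpleGraph

def coveredVerts {V : Type*} [DecidableEq V] (M : Finset (Sym2 V)) : Finset V :=
  M.biUnion Sym2.toFinset

theorem card_coveredVerts_le {V : Type*} [DecidableEq V] (M : Finset (Sym2 V)) :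
    #(coveredVerts M) ≤ 2 * #M := by
  rw [mul_comm]
  refine card_biUnion_le_card_mul _ _ _ fun e _ => ?_
  rw [Sym2.card_toFinset]
  split_ifs <;> omega

namespace IsMatchingSet

variable {V : Type*} {G : SimpleGraph V} {M : Finset (Sym2 V)}

theorem card_le_matchNum_s3 [Fintype V] (hM : IsMatchingSet G M) :
    #M ≤ matchNum G :=
  le_csSup ⟨Fintype.card (Sym2 V), fun _ ⟨N, _, hN⟩ => hN ▸ N.card_le_univ⟩
    ⟨M, hM, rfl⟩

theorem insert [DecidableEq V] {e : Sym2 V} (hM : IsMatchingSet G M) (he : e ∈ G.edgeSet)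
    (hfree : ∀ v ∈ e, ∀ f ∈ M, v ∉ f) : IsMatchingSet G (insert e M) := by
  refine ⟨?_, ?_⟩
  · rw [coe_insert]
    exact Set.insert_subset he hM.1
  · intro f hf g hg hfg v hvf hvg
    rcases mem_insert.1 hf with rfl | hfM <;> rcases mem_insert.1 hg with rfl | hgM
    · exact hfg rfl
    · exact hfree v hvf g hgM hvg
    · exact hfree v hvg f hfM hvf
    · exact hM.2 f hfM g hgM hfg v hvf hvg

theorem isVertexCover_coveredVerts_of_maximum [DecidableEq V] (hM : IsMatchingSet G M)
    (hmax : ∀ M', IsMatchingSet G M' → #M' ≤ #M) : G.IsVertexCover ↑(coveredVerts M) := by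
  intro u w huw
  by_contra! huncovered
  have hfree : ∀ v ∈ s(u, w), ∀ f ∈ M, v ∉ f := by
    intro v hv f hf hvf
    have hv' : v ∈ coveredVerts M := mem_biUnion.2 ⟨f, hf, Sym2.mem_toFinset.2 hvf⟩
    rcases Sym2.mem_iff.1 hv with rfl | rfl
    exacts [huncovered.1 hv', huncovered.2 hv']
  have hnew : s(u, w) ∉ M := fun h => hfree u (Sym2.mem_mk_left u w) _ h (Sym2.mem_mk_left u w)
  have := hmax _ (hM.insert huw hfree)
  rw [card_insert_of_notMem hnew] at this
  omega

end IsMatchingSet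

theorem exists_isVertexCover_card_le_two_mul_matchNum {V : Type*} [Fintype V] [DecidableEq V]
    (G : SimpleGraph V) : ∃ W : Finset V, G.IsVertexCover ↑W ∧ #W ≤ 2 * matchNum G := by
  obtain ⟨M, hM, hmax⟩ := exists_max_image {M : Finset (Sym2 V) | IsMatchingSet G M} card
    ⟨∅, mem_filter.2 ⟨mem_univ _, by simp [IsMatchingSet]⟩⟩
  simp only [mem_filter, mem_univ, true_and] at hM hmax
  exact ⟨coveredVerts M, hM.isVertexCover_coveredVerts_of_maximum hmax,
    (card_coveredVerts_le M).trans (Nat.mul_le_mul_left 2 hM.card_le_matchNum_s3)⟩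

namespace SimpleGraph.IsVertexCover

variable {V : Type*} [Fintype V] {G : SimpleGraph V} [DecidableRel G.Adj]
  {W : Finset V}

theorem degree_le_card (hW : G.IsVertexCover ↑W) {u : V} (hu : u ∉ W) : G.degree u ≤ #W := by
  rw [← card_neighborFinset_eq_degree]
  refine card_le_card fun w hw => ?_
  exact (hW ((mem_neighborFinset _ _ _).1 hw)).resolve_left hu

theorem filter_le_degree_subset (hW : G.IsVertexCover ↑W) {d : ℕ} (hd : #W < d) :
    ({v | d ≤ G.degree v} : Finset V) ⊆ W := by
  intro u hu
  by_contra huW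
  have := hW.degree_le_card huW
  simp only [mem_filter, mem_univ, true_and] at hu
  omega

theorem card_filter_degree_lt_le [DecidableEq V] (hW : G.IsVertexCover ↑W) (d : ℕ) :
    #{e ∈ G.edgeFinset | ∀ v ∈ e, G.degree v < d} ≤ #W * d := by
  have hsub : {e ∈ G.edgeFinset | ∀ v ∈ e, G.degree v < d} ⊆
      {v ∈ W | G.degree v < d}.biUnion fun v => G.incidenceFinset v := by
    intro e he
    obtain ⟨he, hlow⟩ := mem_filter.1 he
    rw [mem_edgeFinset] at he
    induction e with | h u w =>
    obtain ⟨v, hv, hvW⟩ : ∃ v ∈ s(u, w), v ∈ W := by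
      rcases hW he with h | h
      exacts [⟨u, Sym2.mem_mk_left u w, h⟩, ⟨w, Sym2.mem_mk_right u w, h⟩]
    exact mem_biUnion.2
      ⟨v, mem_filter.2 ⟨hvW, hlow v hv⟩, (mem_incidenceFinset _ _ _).2 ⟨he, hv⟩⟩
  calc #{e ∈ G.edgeFinset | ∀ v ∈ e, G.degree v < d}
      ≤ #{v ∈ W | G.degree v < d} * d :=
        (card_le_card hsub).trans <| card_biUnion_le_card_mul _ _ _ fun v hv => by
          rw [card_incidenceFinset_eq_degree]
          exact (mem_filter.1 hv).2.le
    _ ≤ #W * d := Nat.mul_le_mul_right d (card_filter_le _ _)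

end SimpleGraph.IsVertexCover

theorem stmt_3 {V : Type*} [Fintype V] [DecidableEq V]
    (k : ℕ) (hk : 1 ≤ k)
    (G : SimpleGraph V) [DecidableRel G.Adj]
    (hmatch : matchNum G ≤ k) :
    (Finset.univ.filter (fun v : V => 10 * k ≤ G.degree v)).card ≤ 2 * k ∧
    (G.edgeFinset.filter (fun e => ∀ v ∈ e, G.degree v < 10 * k)).card ≤ 20 * k ^ 2 := by
  obtain ⟨W, hW, hWcard⟩ := exists_isVertexCover_card_le_two_mul_matchNum G
  replace hWcard : #W ≤ 2 * k := by omega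
  constructor
  · exact (card_le_card (hW.filter_le_degree_subset (d := 10 * k) (by omega))).trans hWcard
  · calc _ ≤ #W * (10 * k) := hW.card_filter_degree_lt_le _
      _ ≤ 2 * k * (10 * k) := Nat.mul_le_mul_right _ hWcard
      _ = 20 * k ^ 2 := by ring
end

section
/- Let G = (V, E) be a finite simple graph, let W be a vertex cover of G, let xy ∈ E, and let c : V → B be a coloring such that c(x) ≠ c(y) and neither c(x) nor c(y) belongs to the set {c(w) : w ∈ (W ∪ Γ(x) ∪ Γ(y)) ∖ {x, y}}. Then xy is the unique edge e ∈ E whose endpoint color set c(e) equals {c(x), c(y)}. -/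
/-!
Let `S = (W ∪ Γ(x) ∪ Γ(y)) ∖ {x, y}`. If `uv` is an edge with `c u = c x` and `c v = c y`, then
`u` and `v` avoid `S`, and `u ≠ y`, `v ≠ x` because `c x ≠ c y`; so `u ∈ W ∪ Γ(x) ∪ Γ(y)` forces
`u = x`, and likewise for `v`. Since `W` is a vertex cover, one endpoint lies in `W`, hence is
`x` (resp. `y`), and the other is then a neighbour of it, hence is `y` (resp. `x`).
-/

namespace SimpleGraph

variable {V B : Type*} {G : SimpleGraph V} {c : V → B} {x y : V}

theorem setOf_mem_edgeSet_map_eq_singleton (hxy : G.Adj x y)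
    (huniq : ∀ ⦃u v⦄, G.Adj u v → c u = c x → c v = c y → u = x ∧ v = y) :
    {e | e ∈ G.edgeSet ∧ Sym2.map c e = s(c x, c y)} = {s(x, y)} := by
  ext e
  induction e using Sym2.ind with
  | _ u v =>
    simp only [Set.mem_ofPred_eq, Set.mem_singleton_iff, Sym2.map_mk, mem_edgeSet]
    constructor
    · rintro ⟨huv, hmap⟩
      rcases Sym2.eq_iff.mp hmap with ⟨hu, hv⟩ | ⟨hv, hu⟩
      · obtain ⟨rfl, rfl⟩ := huniq huv hu hv
        rfl
      · obtain ⟨rfl, rfl⟩ := huniq huv.symm hu hv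
        exact Sym2.eq_swap
    · intro h
      rcases Sym2.eq_iff.mp h with ⟨rfl, rfl⟩ | ⟨rfl, rfl⟩
      · exact ⟨hxy, rfl⟩
      · exact ⟨hxy.symm, Sym2.eq_swap⟩

end SimpleGraph

theorem Set.mem_of_apply_notMem_image_diff {α β : Type*} {f : α → β} {S s : Set α} {a : α}
    (ha : a ∈ S) (h : f a ∉ f '' (S \ s)) : a ∈ s := by
  by_contra has
  exact h ⟨a, ⟨ha, has⟩, rfl⟩

theorem eq_of_apply_eq_of_notMem_image_diff {α β : Type*} {f : α → β} {S : Set α} {a x y : α}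
    (ha : a ∈ S) (hfa : f a = f x) (hxy : f x ≠ f y) (hx : f x ∉ f '' (S \ {x, y})) : a = x := by
  rw [← hfa] at hx
  rcases Set.mem_of_apply_notMem_image_diff ha hx with rfl | rfl
  · rfl
  · exact absurd hfa.symm hxy

theorem stmt_5 {V B : Type*} (G : SimpleGraph V) (W : Set V)
    (hW : ∀ ⦃u v : V⦄, G.Adj u v → u ∈ W ∨ v ∈ W)
    (x y : V) (hxy : G.Adj x y) (c : V → B)
    (hcxy : c x ≠ c y)
    (hx : c x ∉ c '' ((W ∪ G.neighborSet x ∪ G.neighborSet y) \ {x, y}))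
    (hy : c y ∉ c '' ((W ∪ G.neighborSet x ∪ G.neighborSet y) \ {x, y})) :
    {e | e ∈ G.edgeSet ∧ Sym2.map c e = s(c x, c y)} = {s(x, y)} := by
  rw [Set.pair_comm] at hy
  refine SimpleGraph.setOf_mem_edgeSet_map_eq_singleton hxy fun u v huv hu hv ↦ ?_
  have hu_eq (hmem : u ∈ W ∪ G.neighborSet x ∪ G.neighborSet y) : u = x :=
    eq_of_apply_eq_of_notMem_image_diff hmem hu hcxy hx
  have hv_eq (hmem : v ∈ W ∪ G.neighborSet x ∪ G.neighborSet y) : v = y :=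
    eq_of_apply_eq_of_notMem_image_diff hmem hv hcxy.symm hy
  rcases hW huv with huW | hvW
  · obtain rfl := hu_eq (.inl (.inl huW))
    exact ⟨rfl, hv_eq (.inl (.inr huv))⟩
  · obtain rfl := hv_eq (.inl (.inl hvW))
    exact ⟨hu_eq (.inr huv.symm), rfl⟩
end

section
/- Let G = (V, E) be a finite simple graph, let W be a vertex cover of G, let u ∈ V, and let c : V → B be a coloring such that c(u) ∉ {c(w) : w ∈ W ∖ {u}}. Let γ be a color with γ ≠ c(u), γ ∈ {c(v) : v ∈ Γ(u)}, and γ ∉ {c(w) : w ∈ W}. Then there exists at least one edge e ∈ E with endpoint color set c(e) = {c(u), γ}, and every edge e ∈ E with c(e) = {c(u), γ} is incident to u. -/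
theorem SimpleGraph.eq_of_adj_of_color_eq {V B : Type*} {G : SimpleGraph V} {W : Set V}
    (hW : ∀ ⦃v w : V⦄, G.Adj v w → v ∈ W ∨ w ∈ W) {c : V → B} {u a b : V}
    (hu : c u ∉ c '' (W \ {u})) (hb : c b ∉ c '' W) (hab : G.Adj a b) (ha : c a = c u) :
    a = u := by
  have haW : a ∈ W := (hW hab).resolve_right fun hbW ↦ hb ⟨b, hbW, rfl⟩
  by_contra hau
  exact hu ⟨a, ⟨haW, hau⟩, ha⟩

theorem stmt_6_general {V B : Type*} (G : SimpleGraph V) (W : Set V)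
    (hW : ∀ ⦃v w : V⦄, G.Adj v w → v ∈ W ∨ w ∈ W)
    (u : V) (c : V → B)
    (hu : c u ∉ c '' (W \ {u}))
    (γ : B)
    (hγnbr : γ ∈ c '' G.neighborSet u)
    (hγW : γ ∉ c '' W) :
    (∃ e ∈ G.edgeSet, Sym2.map c e = s(c u, γ)) ∧
      ∀ e ∈ G.edgeSet, Sym2.map c e = s(c u, γ) → u ∈ e := by
  obtain ⟨v, huv, rfl⟩ := hγnbr
  refine ⟨⟨s(u, v), huv, rfl⟩, ?_⟩
  rintro ⟨x, y⟩ hxy hcxy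
  rw [SimpleGraph.mem_edgeSet] at hxy
  rw [Sym2.map_mk, Sym2.eq_iff] at hcxy
  rcases hcxy with ⟨hx, hy⟩ | ⟨hx, hy⟩
  · rw [G.eq_of_adj_of_color_eq hW hu (hy ▸ hγW) hxy hx]
    exact Sym2.mem_mk_left u y
  · rw [G.eq_of_adj_of_color_eq hW hu (hx ▸ hγW) hxy.symm hy]
    exact Sym2.mem_mk_right x u

theorem stmt_6 {V B : Type*} (G : SimpleGraph V) (W : Set V)
    (hW : ∀ ⦃v w : V⦄, G.Adj v w → v ∈ W ∨ w ∈ W)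
    (u : V) (c : V → B)
    (hu : c u ∉ c '' (W \ {u}))
    (γ : B) (hγu : γ ≠ c u)
    (hγnbr : γ ∈ c '' G.neighborSet u)
    (hγW : γ ∉ c '' W) :
    (∃ e ∈ G.edgeSet, Sym2.map c e = s(c u, γ)) ∧
      ∀ e ∈ G.edgeSet, Sym2.map c e = s(c u, γ) → u ∈ e :=
  stmt_6_general G W hW u c hu γ hγnbr hγW
end

section
/- Let d ≥ 1 and let G = (V, E) be a d-uniform hypergraph. Let C ⊆ D be finite sets of vertices with |C| ≤ d − 1, and let M_{C,D} = {D' \ C : D' ∈ E, D ∩ D' = C}. Then hs(M_{C,D}) ≤ s_G(C) · d. -/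
/-!
Among the edges `D'` with `D ∩ D' = C`, choose a sunflower `T` with core `C` that cannot be
extended. Every such `D'` meets the petals of `T` outside `C`: either `D' ∈ T`, and its own petal
is nonempty because `|C| < d = |D'|`, or `D'` meets some petal of `T` outside `C`, since otherwise
adding `D'` would extend `T`. Hence the union of the petals is a hitting set of `M_{C,D}` with at
most `|T| · d ≤ s_G(C) · d` vertices.
-/

open scoped Classical

/-- The minimum size of a hitting set of the family `F`: a finite set of
vertices intersecting every member of `F`. -/
noncomputable def hsNum {α : Type*} (F : Finset (Finset α)) : ℕ :=
  sInf {n | ∃ H : Finset α, (∀ D ∈ F, ∃ v ∈ H, v ∈ D) ∧ H.card = n}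

/-- `T` is a sunflower with core `C` in the hypergraph with edge set `E`:
a set of edges, each containing `C`, whose pairwise intersections equal `C`. -/
def IsSunflower {α : Type*} [DecidableEq α] (E : Finset (Finset α)) (C : Finset α)
    (T : Finset (Finset α)) : Prop :=
  T ⊆ E ∧ (∀ D ∈ T, C ⊆ D) ∧ ∀ D ∈ T, ∀ D' ∈ T, D ≠ D' → D ∩ D' = C

/-- `sunflowerNum E C` is the maximum number of petals of a sunflower with
core `C` in the hypergraph with edge set `E` (it is `0` if no edge contains `C`). -/
noncomputable def sunflowerNum {α : Type*} [DecidableEq α] (E : Finset (Finset α))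
    (C : Finset α) : ℕ :=
  sSup {n | ∃ T : Finset (Finset α), IsSunflower E C T ∧ T.card = n}

open Finset

section

variable {α : Type*}

theorem hsNum_le_card {F : Finset (Finset α)} {H : Finset α}
    (hH : ∀ X ∈ F, ∃ v ∈ H, v ∈ X) : hsNum F ≤ H.card :=
  Nat.sInf_le ⟨H, hH, rfl⟩

variable [DecidableEq α] {E F T : Finset (Finset α)} {C X : Finset α}

namespace IsSunflower

theorem mono (hT : IsSunflower F C T) (hFE : F ⊆ E) : IsSunflower E C T :=
  ⟨hT.1.trans hFE, hT.2⟩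

theorem insert (hT : IsSunflower F C T) (hXF : X ∈ F) (hCX : C ⊆ X)
    (hTX : ∀ Y ∈ T, Y ∩ X = C) : IsSunflower F C (insert X T) := by
  refine ⟨insert_subset hXF hT.1, ?_, ?_⟩
  · simpa only [forall_mem_insert] using ⟨hCX, hT.2.1⟩
  · simp only [forall_mem_insert]
    refine ⟨⟨fun h => absurd rfl h, fun Y hY _ => inter_comm X Y ▸ hTX Y hY⟩,
      fun Y hY => ⟨fun _ => hTX Y hY, hT.2.2 Y hY⟩⟩

theorem card_le_sunflowerNum (hT : IsSunflower E C T) : T.card ≤ sunflowerNum E C :=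
  le_csSup ⟨E.card, fun _ ⟨_, hT', hn⟩ => hn ▸ card_le_card hT'.1⟩ ⟨T, hT, rfl⟩

end IsSunflower

theorem exists_maximal_isSunflower (hCF : ∀ X ∈ F, C ⊆ X) :
    ∃ T, IsSunflower F C T ∧ ∀ X ∈ F, X ∉ T → ∃ Y ∈ T, Y ∩ X ≠ C := by
  have hempty : IsSunflower F C ∅ := ⟨empty_subset _, by simp, by simp⟩
  obtain ⟨T, hTmem, hTmax⟩ := exists_max_image (F.powerset.filter (IsSunflower F C)) card
    ⟨∅, mem_filter.2 ⟨empty_mem_powerset _, hempty⟩⟩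
  have hT : IsSunflower F C T := (mem_filter.1 hTmem).2
  refine ⟨T, hT, fun X hXF hXT => ?_⟩
  by_contra! hTX
  have hle := hTmax _ (mem_filter.2 ⟨mem_powerset.2 (insert_subset hXF hT.1),
    hT.insert hXF (hCF X hXF) hTX⟩)
  rw [card_insert_of_notMem hXT] at hle
  omega

theorem hsNum_image_sdiff_le_card_petals (hT : IsSunflower F C T)
    (hmax : ∀ X ∈ F, X ∉ T → ∃ Y ∈ T, Y ∩ X ≠ C) (hCF : ∀ X ∈ F, C ⊂ X) :
    hsNum (F.image (· \ C)) ≤ (T.biUnion (· \ C)).card := by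
  refine hsNum_le_card ?_
  simp only [forall_mem_image, mem_biUnion]
  intro X hXF
  by_cases hXT : X ∈ T
  · obtain ⟨v, hv⟩ := sdiff_nonempty.2 (hCF X hXF).2
    exact ⟨v, ⟨X, hXT, hv⟩, hv⟩
  · obtain ⟨Y, hYT, hYX⟩ := hmax X hXF hXT
    have hCYX : C ⊂ Y ∩ X :=
      (subset_inter (hT.2.1 Y hYT) (hCF X hXF).1).ssubset_of_ne (Ne.symm hYX)
    obtain ⟨v, hvYX, hvC⟩ := exists_of_ssubset hCYX
    obtain ⟨hvY, hvX⟩ := mem_inter.1 hvYX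
    exact ⟨v, ⟨Y, hYT, mem_sdiff.2 ⟨hvY, hvC⟩⟩, mem_sdiff.2 ⟨hvX, hvC⟩⟩

end

theorem stmt_7_general {α : Type*} [DecidableEq α] (d : ℕ) (hd : 1 ≤ d)
    (E : Finset (Finset α)) (huni : ∀ D ∈ E, D.card = d)
    (C D : Finset α) (hC : C.card ≤ d - 1) :
    hsNum ((E.filter (fun D' => D ∩ D' = C)).image (fun D' => D' \ C)) ≤
      sunflowerNum E C * d := by
  set F := E.filter (fun D' => D ∩ D' = C)
  have hFE : F ⊆ E := filter_subset _ _
  have hCF : ∀ X ∈ F, C ⊆ X := fun X hX => (mem_filter.1 hX).2 ▸ inter_subset_right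
  have hCF' : ∀ X ∈ F, C ⊂ X := fun X hX =>
    (hCF X hX).ssubset_of_ne fun hCX => by have := huni X (hFE hX); rw [← hCX] at this; omega
  obtain ⟨T, hT, hmax⟩ := exists_maximal_isSunflower hCF
  calc hsNum (F.image (· \ C)) ≤ (T.biUnion (· \ C)).card :=
        hsNum_image_sdiff_le_card_petals hT hmax hCF'
    _ ≤ T.card * d := card_biUnion_le_card_mul _ _ _ fun Y hY =>
        (card_le_card sdiff_subset).trans (huni Y (hFE (hT.1 hY))).le
    _ ≤ sunflowerNum E C * d := Nat.mul_le_mul_right d (hT.mono hFE).card_le_sunflowerNum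

theorem stmt_7 {α : Type*} [DecidableEq α] (d : ℕ) (hd : 1 ≤ d)
    (E : Finset (Finset α)) (huni : ∀ D ∈ E, D.card = d)
    (C D : Finset α) (hCD : C ⊆ D) (hC : C.card ≤ d - 1) :
    hsNum ((E.filter (fun D' => D ∩ D' = C)).image (fun D' => D' \ C)) ≤
      sunflowerNum E C * d :=
  stmt_7_general d hd E huni C D hC
end

section
/- Let ν ≥ 1 be an integer and let G = (V, E) be a finite simple graph on n vertices. Call a vertex heavy if its degree is at least 2ν + 3, and call an edge shallow if neither of its endpoints is heavy; let h be the number of heavy vertices and s the number of shallow edges. Let 0 < ε ≤ 1 and set p = 8ε^{−2}n^{−1/5}; assume p ≤ 1, (2ν + 3)·p ≤ 1, and that n is large enough that exp(−8n^{1/5}/3) ≤ 1/10. Include each vertex of V in a random set Z independently with probability p, let h_Z be the number of heavy vertices in Z, and let s_Z be the number of shallow edges both of whose endpoints lie in Z. Then with probability at least 4/5, |max{h_Z/p, s_Z/p²} − max{s, h}| ≤ ε · max{n^{2/5}, s, h}. -/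
/-!
Encode `Z` by `ω : V → Bool`. Both `h_Z` and `s_Z` are sums of indicators `1[T ⊆ Z]` (with
`T = {v}` for heavy `v`, `T = e` for shallow `e`) of mean `p ^ |T|`, and the variance of such a
sum is at most the sum of `p ^ |T ∪ T'|` over intersecting pairs. For heavy vertices only the
diagonal pairs intersect, so `Var h_Z ≤ h p`. A shallow edge meets at most `4ν + 4` edges and two
distinct edges span at least three vertices, so `Var s_Z ≤ s p² (1 + (4ν + 4) p) ≤ 3 s p²`.
With `M = max (n^{2/5}, s, h)`, Chebyshev bounds the probabilities that `h_Z / p` and `s_Z / p²`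
miss `h` and `s` by more than `εM` by `1 / (ε² p M)` and `3 / (ε² p² M)`; both are at most
`3/64`, because `p ≤ 1` forces `ε² p n^{2/5} = 8 n^{1/5} ≥ 64` and `ε² p² n^{2/5} = 64 ε⁻²`.
Outside these two events the maxima differ by at most `εM`.
-/

open MeasureTheory Finset
open scoped ENNReal

theorem sum_filter_lt_abs_sub_le {Ω : Type*} [Fintype Ω] {q : Ω → ℝ} (hq : ∀ ω, 0 ≤ q ω)
    (f : Ω → ℝ) (m : ℝ) {t : ℝ} (ht : 0 < t) :
    ∑ ω with t < |f ω - m|, q ω ≤ (∑ ω, q ω * (f ω - m) ^ 2) / t ^ 2 := by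
  rw [le_div_iff₀ (by positivity), sum_mul]
  calc ∑ ω with t < |f ω - m|, q ω * t ^ 2
      ≤ ∑ ω with t < |f ω - m|, q ω * (f ω - m) ^ 2 := by
        refine sum_le_sum fun ω hω => mul_le_mul_of_nonneg_left ?_ (hq ω)
        rw [← sq_abs (f ω - m)]
        exact pow_le_pow_left₀ ht.le (mem_filter.mp hω).2.le 2
    _ ≤ ∑ ω, q ω * (f ω - m) ^ 2 :=
        sum_le_sum_of_subset_of_nonneg (subset_univ _)
          fun ω _ _ => mul_nonneg (hq ω) (sq_nonneg _)

section BernoulliCube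

variable {V : Type*} [Fintype V]

noncomputable def bernoulliWeight (p : ℝ) (ω : V → Bool) : ℝ :=
  ∏ v, if ω v then p else 1 - p

noncomputable def allTrueIndicator (T : Finset V) (ω : V → Bool) : ℝ :=
  if ∀ v ∈ T, ω v = true then 1 else 0

theorem bernoulliWeight_nonneg {p : ℝ} (hp0 : 0 ≤ p) (hp1 : p ≤ 1) (ω : V → Bool) :
    0 ≤ bernoulliWeight p ω :=
  prod_nonneg fun v _ => by split <;> linarith

noncomputable def bernoulliPi (p : ℝ) (hp1 : p ≤ 1) : Measure (V → Bool) :=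
  Measure.pi fun _ => (PMF.bernoulli (Real.toNNReal p) (Real.toNNReal_le_one.mpr hp1)).toMeasure

theorem bernoulliPi_singleton {p : ℝ} (hp0 : 0 ≤ p) (hp1 : p ≤ 1) (ω : V → Bool) :
    bernoulliPi p hp1 {ω} = ENNReal.ofReal (bernoulliWeight p ω) := by
  rw [bernoulliPi, ← Set.univ_pi_singleton, Measure.pi_pi, bernoulliWeight,
    ENNReal.ofReal_prod_of_nonneg fun v _ => by split <;> linarith]
  refine prod_congr rfl fun v _ => ?_
  rw [PMF.toMeasure_apply_singleton _ _ (measurableSet_singleton _), PMF.bernoulli_apply]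
  cases ω v
  · simp only [cond_false, Bool.false_eq_true, if_false, ENNReal.ofReal_sub _ hp0,
      ENNReal.ofReal_one, ENNReal.coe_sub, ENNReal.coe_one]
    rfl
  · rfl

end BernoulliCube

section BernoulliCubeMoments

variable {V : Type*} [Fintype V] [DecidableEq V] {ι : Type*}

theorem allTrueIndicator_mul (T T' : Finset V) (ω : V → Bool) :
    allTrueIndicator T ω * allTrueIndicator T' ω = allTrueIndicator (T ∪ T') ω := by
  simp only [allTrueIndicator, forall_mem_union, ite_zero_mul_ite_zero, one_mul]

theorem sum_bernoulliWeight_mul_allTrueIndicator (p : ℝ) (T : Finset V) :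
    ∑ ω, bernoulliWeight p ω * allTrueIndicator T ω = p ^ #T := by
  have factor (ω : V → Bool) : allTrueIndicator T ω =
      ∏ v, if v ∈ T then (if ω v = true then (1 : ℝ) else 0) else 1 := by
    rw [prod_ite_mem, univ_inter, prod_boole, allTrueIndicator]
  calc ∑ ω, bernoulliWeight p ω * allTrueIndicator T ω
      = ∑ ω : V → Bool, ∏ v, (if ω v then p else 1 - p) *
          (if v ∈ T then (if ω v = true then (1 : ℝ) else 0) else 1) := by
        simp only [bernoulliWeight, factor, prod_mul_distrib]
    _ = ∏ v, ∑ b : Bool, (if b then p else 1 - p) *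
          (if v ∈ T then (if b = true then (1 : ℝ) else 0) else 1) :=
        (Fintype.prod_sum fun v (b : Bool) => (if b then p else 1 - p) *
          (if v ∈ T then (if b = true then (1 : ℝ) else 0) else 1)).symm
    _ = ∏ v, if v ∈ T then p else 1 :=
        prod_congr rfl fun v _ => by by_cases hv : v ∈ T <;> simp [hv]
    _ = p ^ #T := by rw [prod_ite_mem, univ_inter, prod_const]

theorem sum_bernoulliWeight (p : ℝ) : ∑ ω : V → Bool, bernoulliWeight p ω = 1 := by
  simpa [allTrueIndicator] using sum_bernoulliWeight_mul_allTrueIndicator (V := V) p ∅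

theorem sum_bernoulliWeight_mul_sq_sub_eq (p : ℝ) (A : Finset ι) (T : ι → Finset V) :
    ∑ ω, bernoulliWeight p ω *
        (∑ i ∈ A, allTrueIndicator (T i) ω - ∑ i ∈ A, p ^ #(T i)) ^ 2 =
      ∑ i ∈ A, ∑ j ∈ A, (p ^ #(T i ∪ T j) - p ^ #(T i) * p ^ #(T j)) := by
  set m := ∑ i ∈ A, p ^ #(T i)
  have first_moment : ∑ ω, bernoulliWeight p ω * ∑ i ∈ A, allTrueIndicator (T i) ω = m := by
    simp only [mul_sum]
    rw [sum_comm]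
    exact sum_congr rfl fun i _ => sum_bernoulliWeight_mul_allTrueIndicator p (T i)
  have second_moment : ∑ ω, bernoulliWeight p ω * (∑ i ∈ A, allTrueIndicator (T i) ω) ^ 2 =
      ∑ i ∈ A, ∑ j ∈ A, p ^ #(T i ∪ T j) := by
    simp only [sq, sum_mul_sum, allTrueIndicator_mul]
    simp only [mul_sum]
    rw [sum_comm]
    refine sum_congr rfl fun i _ => ?_
    rw [sum_comm]
    exact sum_congr rfl fun j _ => sum_bernoulliWeight_mul_allTrueIndicator p _
  calc ∑ ω, bernoulliWeight p ω * (∑ i ∈ A, allTrueIndicator (T i) ω - m) ^ 2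
      = ∑ ω, (bernoulliWeight p ω * (∑ i ∈ A, allTrueIndicator (T i) ω) ^ 2
          - 2 * m * (bernoulliWeight p ω * ∑ i ∈ A, allTrueIndicator (T i) ω)
          + m ^ 2 * bernoulliWeight p ω) := sum_congr rfl fun ω _ => by ring
    _ = ∑ ω, bernoulliWeight p ω * (∑ i ∈ A, allTrueIndicator (T i) ω) ^ 2
          - 2 * m * ∑ ω, bernoulliWeight p ω * ∑ i ∈ A, allTrueIndicator (T i) ω
          + m ^ 2 * ∑ ω, bernoulliWeight p ω := by
        rw [sum_add_distrib, sum_sub_distrib, ← mul_sum, ← mul_sum]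
    _ = ∑ i ∈ A, ∑ j ∈ A, p ^ #(T i ∪ T j) - m * m := by
        rw [first_moment, second_moment, sum_bernoulliWeight]; ring
    _ = _ := by simp only [m, sum_mul_sum, ← sum_sub_distrib]

theorem sum_bernoulliWeight_mul_sq_sub_le {p : ℝ} (hp0 : 0 ≤ p) (A : Finset ι)
    (T : ι → Finset V) :
    ∑ ω, bernoulliWeight p ω *
        (∑ i ∈ A, allTrueIndicator (T i) ω - ∑ i ∈ A, p ^ #(T i)) ^ 2 ≤
      ∑ i ∈ A, ∑ j ∈ A with ¬Disjoint (T i) (T j), p ^ #(T i ∪ T j) := by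
  rw [sum_bernoulliWeight_mul_sq_sub_eq]
  refine sum_le_sum fun i _ => ?_
  rw [sum_filter]
  refine sum_le_sum fun j _ => ?_
  split_ifs with hij
  · rw [card_union_of_disjoint hij, pow_add, sub_self]
  · exact sub_le_self _ (mul_nonneg (pow_nonneg hp0 _) (pow_nonneg hp0 _))

theorem bernoulliPi_setOf {p : ℝ} (hp0 : 0 ≤ p) (hp1 : p ≤ 1)
    (P : (V → Bool) → Prop) [DecidablePred P] :
    bernoulliPi p hp1 {ω | P ω} = ENNReal.ofReal (∑ ω with P ω, bernoulliWeight p ω) := by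
  rw [ENNReal.ofReal_sum_of_nonneg fun ω _ => bernoulliWeight_nonneg hp0 hp1 ω,
    ← coe_filter_univ, ← sum_measure_singleton]
  exact sum_congr rfl fun ω _ => bernoulliPi_singleton hp0 hp1 ω

theorem bernoulliPi_deviation_le {p : ℝ} (hp0 : 0 ≤ p) (hp1 : p ≤ 1)
    (A : Finset ι) (T : ι → Finset V) {c m t : ℝ} (hc : 0 < c) (ht : 0 < t)
    (hm : ∑ i ∈ A, p ^ #(T i) = c * m) :
    bernoulliPi p hp1 {ω | t < |(∑ i ∈ A, allTrueIndicator (T i) ω) / c - m|} ≤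
      ENNReal.ofReal
        ((∑ i ∈ A, ∑ j ∈ A with ¬Disjoint (T i) (T j), p ^ #(T i ∪ T j)) / (c * t) ^ 2) := by
  have rescale (x : ℝ) : t < |x / c - m| ↔ c * t < |x - c * m| := by
    rw [show x / c - m = (x - c * m) / c by field_simp, abs_div, abs_of_pos hc,
      lt_div_iff₀ hc, mul_comm]
  simp only [rescale, bernoulliPi_setOf hp0 hp1, ← hm]
  refine ENNReal.ofReal_le_ofReal ((sum_filter_lt_abs_sub_le
    (bernoulliWeight_nonneg hp0 hp1) _ _ (mul_pos hc ht)).trans ?_)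
  gcongr
  exact sum_bernoulliWeight_mul_sq_sub_le hp0 A T

theorem bernoulliPi_card_filter_deviation_le {p : ℝ} (hp0 : 0 < p) (hp1 : p ≤ 1)
    (H : Finset V) {t : ℝ} (ht : 0 < t) :
    bernoulliPi p hp1 {ω | t < |(#{v ∈ H | ω v = true} : ℝ) / p - #H|} ≤
      ENNReal.ofReal (#H / (p * t ^ 2)) := by
  have count (ω : V → Bool) :
      (#{v ∈ H | ω v = true} : ℝ) = ∑ v ∈ H, allTrueIndicator {v} ω := by
    rw [natCast_card_filter]
    simp only [allTrueIndicator, mem_singleton, forall_eq]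
  have mean : ∑ v ∈ H, p ^ #({v} : Finset V) = p * #H := by simp [mul_comm]
  have overlap : ∑ v ∈ H, ∑ w ∈ H with ¬Disjoint ({v} : Finset V) {w},
      p ^ #({v} ∪ {w} : Finset V) = #H * p := by
    rw [← nsmul_eq_mul, ← sum_const]
    refine sum_congr rfl fun v hv => ?_
    rw [show {w ∈ H | ¬Disjoint ({v} : Finset V) {w}} = {v} by ext; aesop]
    simp
  simp only [count]
  refine (bernoulliPi_deviation_le hp0.le hp1 H _ hp0 ht mean).trans_eq ?_
  rw [overlap]
  congr 1
  field_simp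

end BernoulliCubeMoments

theorem Sym2.three_le_card_toFinset_union {α : Type*} [DecidableEq α] {e f : Sym2 α}
    (he : ¬e.IsDiag) (hf : ¬f.IsDiag) (hef : e ≠ f) : 3 ≤ #(e.toFinset ∪ f.toFinset) := by
  have hfe : ¬f.toFinset ⊆ e.toFinset := fun hsub => hef <| Sym2.ext fun v => by
    rw [← Sym2.mem_toFinset, ← Sym2.mem_toFinset, eq_of_subset_of_card_le hsub
      (by rw [Sym2.card_toFinset_of_not_isDiag e he, Sym2.card_toFinset_of_not_isDiag f hf])]
  have := card_lt_card (left_lt_sup.mpr hfe)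
  rwa [Sym2.card_toFinset_of_not_isDiag e he] at this

section Graph

variable {V : Type*} [Fintype V] [DecidableEq V]

theorem SimpleGraph.card_edges_meeting_le (G : SimpleGraph V) [DecidableRel G.Adj]
    (e : Sym2 V) :
    #{f ∈ G.edgeFinset | ¬Disjoint e.toFinset f.toFinset} ≤ ∑ v ∈ e.toFinset, G.degree v := by
  calc #{f ∈ G.edgeFinset | ¬Disjoint e.toFinset f.toFinset}
      ≤ #(e.toFinset.biUnion fun v => G.incidenceFinset v) := by
        refine card_le_card fun f hf => ?_
        obtain ⟨hfE, hmeet⟩ := mem_filter.mp hf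
        obtain ⟨v, hve, hvf⟩ := not_disjoint_iff.mp hmeet
        exact mem_biUnion.mpr ⟨v, hve, (G.mem_incidenceFinset v f).mpr
          ⟨G.mem_edgeFinset.mp hfE, Sym2.mem_toFinset.mp hvf⟩⟩
    _ ≤ ∑ v ∈ e.toFinset, #(G.incidenceFinset v) := card_biUnion_le
    _ = ∑ v ∈ e.toFinset, G.degree v := by simp only [G.card_incidenceFinset_eq_degree]

theorem SimpleGraph.sum_meeting_pow_card_union_le (G : SimpleGraph V) [DecidableRel G.Adj]
    {d : ℕ} {p : ℝ} (hp0 : 0 ≤ p) (hp1 : p ≤ 1) (hdp : d * p ≤ 1)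
    (S : Finset (Sym2 V)) (hS : S ⊆ G.edgeFinset) (hdeg : ∀ e ∈ S, ∀ v ∈ e, G.degree v ≤ d) :
    ∑ e ∈ S, ∑ f ∈ S with ¬Disjoint e.toFinset f.toFinset, p ^ #(e.toFinset ∪ f.toFinset) ≤
      3 * #S * p ^ 2 := by
  have not_diag {e} (he : e ∈ S) : ¬e.IsDiag :=
    G.not_isDiag_of_mem_edgeSet (G.mem_edgeFinset.mp (hS he))
  have per_edge : ∀ e ∈ S, ∑ f ∈ S with ¬Disjoint e.toFinset f.toFinset,
      p ^ #(e.toFinset ∪ f.toFinset) ≤ 3 * p ^ 2 := by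
    intro e he
    have meeting : (#{f ∈ S | ¬Disjoint e.toFinset f.toFinset} : ℝ) ≤ 2 * d := by
      have hsum : ∑ v ∈ e.toFinset, G.degree v ≤ 2 * d := by
        simpa [Sym2.card_toFinset_of_not_isDiag e (not_diag he)] using
          sum_le_card_nsmul e.toFinset (fun v => G.degree v) d
            fun v hv => hdeg e he v (Sym2.mem_toFinset.mp hv)
      exact_mod_cast ((card_le_card (filter_subset_filter _ hS)).trans
        (G.card_edges_meeting_le e)).trans hsum
    calc ∑ f ∈ S with ¬Disjoint e.toFinset f.toFinset, p ^ #(e.toFinset ∪ f.toFinset)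
        ≤ ∑ f ∈ S with ¬Disjoint e.toFinset f.toFinset, ((if e = f then p ^ 2 else 0) + p ^ 3) := by
          refine sum_le_sum fun f hf => ?_
          have hfS := (mem_filter.mp hf).1
          split_ifs with hef
          · rw [← hef, union_self, Sym2.card_toFinset_of_not_isDiag e (not_diag he)]
            linarith [pow_nonneg hp0 3]
          · rw [zero_add]
            exact pow_le_pow_of_le_one hp0 hp1
              (Sym2.three_le_card_toFinset_union (not_diag he) (not_diag hfS) hef)
      _ ≤ p ^ 2 + 2 * d * p ^ 3 := by
          rw [sum_add_distrib, sum_ite_eq, sum_const, nsmul_eq_mul]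
          gcongr ?_ + ?_
          · split_ifs
            exacts [le_rfl, sq_nonneg p]
          · exact mul_le_mul_of_nonneg_right meeting (by positivity)
      _ ≤ 3 * p ^ 2 := by nlinarith [sq_nonneg p]
  calc _ ≤ ∑ e ∈ S, 3 * p ^ 2 := sum_le_sum per_edge
    _ = 3 * #S * p ^ 2 := by rw [sum_const, nsmul_eq_mul]; ring

theorem SimpleGraph.bernoulliPi_card_filter_edges_deviation_le (G : SimpleGraph V)
    [DecidableRel G.Adj] {d : ℕ} {p : ℝ} (hp0 : 0 < p) (hp1 : p ≤ 1) (hdp : d * p ≤ 1)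
    (S : Finset (Sym2 V)) (hS : S ⊆ G.edgeFinset) (hdeg : ∀ e ∈ S, ∀ v ∈ e, G.degree v ≤ d)
    {t : ℝ} (ht : 0 < t) :
    bernoulliPi p hp1 {ω | t < |(#{e ∈ S | ∀ v ∈ e, ω v = true} : ℝ) / p ^ 2 - #S|} ≤
      ENNReal.ofReal (3 * #S / (p ^ 2 * t ^ 2)) := by
  have not_diag {e} (he : e ∈ S) : ¬e.IsDiag :=
    G.not_isDiag_of_mem_edgeSet (G.mem_edgeFinset.mp (hS he))
  have count (ω : V → Bool) :
      (#{e ∈ S | ∀ v ∈ e, ω v = true} : ℝ) = ∑ e ∈ S, allTrueIndicator e.toFinset ω := by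
    rw [natCast_card_filter]
    simp only [allTrueIndicator, Sym2.mem_toFinset]
  have mean : ∑ e ∈ S, p ^ #e.toFinset = p ^ 2 * #S := by
    rw [sum_congr rfl fun e he => by rw [Sym2.card_toFinset_of_not_isDiag e (not_diag he)],
      sum_const, nsmul_eq_mul, mul_comm]
  simp only [count]
  refine (bernoulliPi_deviation_le hp0.le hp1 S _ (by positivity) ht mean).trans
    (ENNReal.ofReal_le_ofReal ?_)
  calc _ ≤ 3 * #S * p ^ 2 / (p ^ 2 * t) ^ 2 := by
        gcongr
        exact G.sum_meeting_pow_card_union_le hp0.le hp1 hdp S hS hdeg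
    _ = 3 * #S / (p ^ 2 * t ^ 2) := by field_simp

end Graph

theorem sixtyFour_le_of_eq_rpow {ε p x M : ℝ} (hε0 : 0 < ε) (hε1 : ε ≤ 1) (hx : 0 < x)
    (hp : p = 8 * ε⁻¹ ^ 2 * x ^ (-(1 : ℝ) / 5)) (hp1 : p ≤ 1) (hM : x ^ ((2 : ℝ) / 5) ≤ M) :
    64 ≤ ε ^ 2 * p * M ∧ 64 ≤ ε ^ 2 * p ^ 2 * M := by
  set a := x ^ ((1 : ℝ) / 5)
  have ha : 0 < a := Real.rpow_pos_of_pos hx _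
  have hinv : x ^ (-(1 : ℝ) / 5) = a⁻¹ := by
    rw [neg_div, Real.rpow_neg hx.le]
  have hsq : x ^ ((2 : ℝ) / 5) = a ^ 2 := by
    rw [← Real.rpow_natCast, ← Real.rpow_mul hx.le]; norm_num
  have hε : 1 ≤ ε⁻¹ ^ 2 := one_le_pow₀ ((one_le_inv₀ hε0).mpr hε1)
  rw [hinv] at hp
  rw [hsq] at hM
  have hp0 : 0 < p := by rw [hp]; positivity
  suffices 64 ≤ ε ^ 2 * p * a ^ 2 ∧ 64 ≤ ε ^ 2 * p ^ 2 * a ^ 2 from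
    ⟨this.1.trans (by gcongr), this.2.trans (by gcongr)⟩
  rw [hp]
  have ha8 : 8 ≤ a := by
    rw [hp, ← div_eq_mul_inv, div_le_one ha] at hp1
    linarith
  constructor
  · calc (64 : ℝ) ≤ 8 * a := by linarith
      _ = ε ^ 2 * (8 * ε⁻¹ ^ 2 * a⁻¹) * a ^ 2 := by field_simp
  · calc (64 : ℝ) ≤ 64 * ε⁻¹ ^ 2 := by linarith
      _ = ε ^ 2 * (8 * ε⁻¹ ^ 2 * a⁻¹) ^ 2 * a ^ 2 := by field_simp; ring

theorem div_mul_mul_sq_le_of_le {x M q ε : ℝ} (hx : x ≤ M) (hM : 0 < M)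
    (h64 : 64 ≤ ε ^ 2 * q * M) : x / (q * (ε * M) ^ 2) ≤ 1 / 64 := by
  have hscale : q * (ε * M) ^ 2 = ε ^ 2 * q * M * M := by ring
  rw [hscale, div_le_div_iff₀ (mul_pos (by linarith) hM) (by norm_num)]
  nlinarith

theorem MeasureTheory.ofReal_one_sub_add_le_measure {Ω : Type*} [MeasurableSpace Ω]
    {μ : Measure Ω} [IsProbabilityMeasure μ] {S B₁ B₂ : Set Ω} {a b : ℝ}
    (h : Sᶜ ⊆ B₁ ∪ B₂) (h₁ : μ B₁ ≤ ENNReal.ofReal a) (h₂ : μ B₂ ≤ ENNReal.ofReal b)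
    (ha : 0 ≤ a) (hb : 0 ≤ b) :
    ENNReal.ofReal (1 - (a + b)) ≤ μ S := by
  rw [ENNReal.ofReal_sub _ (add_nonneg ha hb), ENNReal.ofReal_one, ENNReal.ofReal_add ha hb,
    tsub_le_iff_right]
  calc 1 = μ (S ∪ Sᶜ) := by rw [Set.union_compl_self, measure_univ]
    _ ≤ μ S + μ Sᶜ := measure_union_le _ _
    _ ≤ μ S + (ENNReal.ofReal a + ENNReal.ofReal b) := by
        gcongr
        exact (measure_mono h).trans ((measure_union_le _ _).trans (add_le_add h₁ h₂))

theorem stmt_14_general {V : Type*} [Fintype V] [DecidableEq V]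
    (ν : ℕ)
    (G : SimpleGraph V) [DecidableRel G.Adj]
    (ε p : ℝ) (hε0 : 0 < ε) (hε1 : ε ≤ 1)
    (hpdef : p = 8 * ε⁻¹ ^ 2 * (Fintype.card V : ℝ) ^ (-(1 : ℝ) / 5))
    (hp1 : p ≤ 1)
    (hνp : (2 * (ν : ℝ) + 3) * p ≤ 1)
    (hn : Real.exp (-(8 * (Fintype.card V : ℝ) ^ ((1 : ℝ) / 5)) / 3) ≤ 1 / 10) :
    let n : ℕ := Fintype.card V
    let h : ℕ := (Finset.univ.filter (fun v : V => 2 * ν + 3 ≤ G.degree v)).card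
    let s : ℕ := (G.edgeFinset.filter (fun e => ∀ v ∈ e, G.degree v < 2 * ν + 3)).card
    let μ : Measure (V → Bool) :=
      Measure.pi (fun _ => (PMF.bernoulli (Real.toNNReal p)
        (Real.toNNReal_le_one.mpr hp1)).toMeasure)
    (4 / 5 : ℝ≥0∞) ≤ μ {ω : V → Bool |
      |max (((Finset.univ.filter
              (fun v : V => 2 * ν + 3 ≤ G.degree v ∧ ω v = true)).card : ℝ) / p)
           (((G.edgeFinset.filter
              (fun e => (∀ v ∈ e, G.degree v < 2 * ν + 3) ∧
                ∀ v ∈ e, ω v = true)).card : ℝ) / p ^ 2)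
        - max (s : ℝ) (h : ℝ)| ≤
      ε * max ((n : ℝ) ^ ((2 : ℝ) / 5)) (max (s : ℝ) (h : ℝ))} := by
  intro n h s μ
  have hn0 : (0 : ℝ) < Fintype.card V := by
    refine (Nat.cast_nonneg _).lt_of_ne fun h0 => ?_
    rw [← h0, Real.zero_rpow (by norm_num)] at hn
    norm_num at hn
  have hp0 : 0 < p := by rw [hpdef]; positivity
  set H := univ.filter fun v : V => 2 * ν + 3 ≤ G.degree v
  set S := G.edgeFinset.filter fun e => ∀ v ∈ e, G.degree v < 2 * ν + 3
  set M := max ((n : ℝ) ^ ((2 : ℝ) / 5)) (max (s : ℝ) (h : ℝ))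
  have hM : (n : ℝ) ^ ((2 : ℝ) / 5) ≤ M ∧ (s : ℝ) ≤ M ∧ (h : ℝ) ≤ M := by
    simp only [M, le_max_iff, le_refl, true_or, or_true, and_self]
  have hM0 : 0 < M := (Real.rpow_pos_of_pos hn0 _).trans_le hM.1
  obtain ⟨h64, h64'⟩ := sixtyFour_le_of_eq_rpow hε0 hε1 hn0 hpdef hp1 hM.1
  have bad_heavy :
      μ {ω | ε * M < |(#{v ∈ H | ω v = true} : ℝ) / p - #H|} ≤ ENNReal.ofReal (1 / 10) :=
    (bernoulliPi_card_filter_deviation_le hp0 hp1 H (mul_pos hε0 hM0)).trans <|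
      ENNReal.ofReal_le_ofReal <| (div_mul_mul_sq_le_of_le hM.2.2 hM0 h64).trans (by norm_num)
  have bad_shallow : μ {ω | ε * M < |(#{e ∈ S | ∀ v ∈ e, ω v = true} : ℝ) / p ^ 2 - #S|} ≤
      ENNReal.ofReal (1 / 10) := by
    refine (G.bernoulliPi_card_filter_edges_deviation_le (d := 2 * ν + 2) hp0 hp1
      (by push_cast; nlinarith) S (filter_subset _ _)
      (fun e he v hv => Nat.le_of_lt_succ ((mem_filter.mp he).2 v hv)) (mul_pos hε0 hM0)).trans
      (ENNReal.ofReal_le_ofReal ?_)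
    rw [mul_div_assoc]
    linarith [div_mul_mul_sq_le_of_le hM.2.1 hM0 h64']
  refine le_trans ?_ (ofReal_one_sub_add_le_measure (fun ω hω => ?_) bad_heavy bad_shallow
    (by norm_num) (by norm_num))
  · rw [ENNReal.le_ofReal_iff_toReal_le (by finiteness) (by norm_num)]
    norm_num
  · simp only [Set.mem_compl_iff, Set.mem_union, Set.mem_ofPred_eq, not_le] at hω ⊢
    contrapose! hω
    rw [← filter_filter, ← filter_filter]
    calc _ = |_ - max (h : ℝ) s| := by rw [max_comm (s : ℝ)]
      _ ≤ _ := abs_max_sub_max_le_max _ _ _ _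
      _ ≤ ε * M := max_le hω.1 hω.2

theorem stmt_14 {V : Type*} [Fintype V] [DecidableEq V]
    (ν : ℕ) (hν : 1 ≤ ν)
    (G : SimpleGraph V) [DecidableRel G.Adj]
    (ε p : ℝ) (hε0 : 0 < ε) (hε1 : ε ≤ 1)
    (hpdef : p = 8 * ε⁻¹ ^ 2 * (Fintype.card V : ℝ) ^ (-(1 : ℝ) / 5))
    (hp1 : p ≤ 1)
    (hνp : (2 * (ν : ℝ) + 3) * p ≤ 1)
    (hn : Real.exp (-(8 * (Fintype.card V : ℝ) ^ ((1 : ℝ) / 5)) / 3) ≤ 1 / 10) :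
    let n : ℕ := Fintype.card V
    let h : ℕ := (Finset.univ.filter (fun v : V => 2 * ν + 3 ≤ G.degree v)).card
    let s : ℕ := (G.edgeFinset.filter (fun e => ∀ v ∈ e, G.degree v < 2 * ν + 3)).card
    let μ : Measure (V → Bool) :=
      Measure.pi (fun _ => (PMF.bernoulli (Real.toNNReal p)
        (Real.toNNReal_le_one.mpr hp1)).toMeasure)
    (4 / 5 : ℝ≥0∞) ≤ μ {ω : V → Bool |
      |max (((Finset.univ.filter
              (fun v : V => 2 * ν + 3 ≤ G.degree v ∧ ω v = true)).card : ℝ) / p)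
           (((G.edgeFinset.filter
              (fun e => (∀ v ∈ e, G.degree v < 2 * ν + 3) ∧
                ∀ v ∈ e, ω v = true)).card : ℝ) / p ^ 2)
        - max (s : ℝ) (h : ℝ)| ≤
      ε * max ((n : ℝ) ^ ((2 : ℝ) / 5)) (max (s : ℝ) (h : ℝ))} :=
  stmt_14_general ν G ε p hε0 hε1 hpdef hp1 hνp hn
end

section
/- Let n ≥ 1 and let S, T ⊆ [n]. Let G be the simple graph on the 4n distinct vertices {a_i, b_i, c_i, d_i : i ∈ [n]} whose edge set is {a_i b_i : i ∈ [n]} ∪ {a_i c_i : i ∈ S} ∪ {b_i d_i : i ∈ T}. Then G contains an induced subgraph isomorphic to the path on 4 vertices if and only if S ∩ T ≠ ∅. -/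
/-!
Every edge joins two vertices of the same fibre `{i} × Fin 4`, so an induced `P₄`, being connected,
lies in a single fibre; having four vertices, it fills that fibre. As `P₄` has no isolated vertex,
`c_i` and `d_i` then both have neighbours, i.e. `i ∈ S ∩ T`. Conversely, for `i ∈ S ∩ T` the fibre
of `i` is the induced path `c_i a_i b_i d_i`.
-/

open SimpleGraph

namespace PathGadgets

variable {ι : Type*} (S T : Set ι)

-- The vertex `(i, k)` stands for `a_i, b_i, c_i, d_i` according as `k = 0, 1, 2, 3`.
def graph : SimpleGraph (ι × Fin 4) :=
  fromEdgeSet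
    ({e | ∃ i : ι, e = s((i, 0), (i, 1))} ∪
      {e | ∃ i ∈ S, e = s((i, 0), (i, 2))} ∪
      {e | ∃ i ∈ T, e = s((i, 1), (i, 3))})

variable {S T}

theorem graph_adj {x y : ι × Fin 4} :
    (graph S T).Adj x y ↔ x.1 = y.1 ∧
      (s(x.2, y.2) = s(0, 1) ∨ (x.1 ∈ S ∧ s(x.2, y.2) = s(0, 2)) ∨
        (x.1 ∈ T ∧ s(x.2, y.2) = s(1, 3))) := by
  obtain ⟨i, a⟩ := x
  obtain ⟨j, b⟩ := y
  simp only [graph, fromEdgeSet_adj]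
  aesop

theorem fst_eq_of_adj {x y : ι × Fin 4} (h : (graph S T).Adj x y) : x.1 = y.1 :=
  (graph_adj.1 h).1

theorem mem_left_of_adj {i : ι} {y : ι × Fin 4} (h : (graph S T).Adj (i, 2) y) : i ∈ S := by
  rw [graph_adj] at h
  aesop

theorem mem_right_of_adj {i : ι} {y : ι × Fin 4} (h : (graph S T).Adj (i, 3) y) : i ∈ T := by
  rw [graph_adj] at h
  aesop

theorem fst_eq_of_hom_of_connected {V : Type*} {H : SimpleGraph V} (hH : H.Connected)
    (f : H →g graph S T) (u v : V) : (f u).1 = (f v).1 := by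
  obtain ⟨p⟩ := hH.preconnected u v
  induction p with
  | nil => rfl
  | cons h _ ih => exact (fst_eq_of_adj (f.map_adj h)).trans ih

theorem pathGraph_four_exists_adj (k : Fin 4) : ∃ l, (pathGraph 4).Adj k l := by
  simp only [pathGraph_adj]
  revert k
  decide

theorem fst_mem_inter_of_embedding (f : pathGraph 4 ↪g graph S T) : (f 0).1 ∈ S ∩ T := by
  have hfst (k : Fin 4) : (f k).1 = (f 0).1 :=
    fst_eq_of_hom_of_connected (pathGraph_connected 3) f.toHom k 0
  have hsurj : Function.Surjective fun k => (f k).2 :=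
    Finite.surjective_of_injective fun a b h => f.injective (Prod.ext (by rw [hfst a, hfst b]) h)
  have hneighbour (c : Fin 4) : ∃ y, (graph S T).Adj ((f 0).1, c) y := by
    obtain ⟨k, rfl⟩ := hsurj c
    obtain ⟨l, hl⟩ := pathGraph_four_exists_adj k
    exact ⟨f l, by rw [← hfst k]; exact f.map_adj_iff.2 hl⟩
  exact ⟨mem_left_of_adj (hneighbour 2).choose_spec, mem_right_of_adj (hneighbour 3).choose_spec⟩

def embeddingOfMemInter {i : ι} (hi : i ∈ S ∩ T) : pathGraph 4 ↪g graph S T where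
  toFun k := (i, ![2, 0, 1, 3] k)
  inj' := (Prod.mk_right_injective i).comp (by decide)
  map_rel_iff' {u v} := by
    simp only [Function.Embedding.coeFn_mk, graph_adj, hi.1, hi.2, true_and, pathGraph_adj]
    revert u v
    decide

theorem nonempty_pathGraph_embedding_iff :
    Nonempty (pathGraph 4 ↪g graph S T) ↔ (S ∩ T).Nonempty :=
  ⟨fun ⟨f⟩ => ⟨_, fst_mem_inter_of_embedding f⟩, fun ⟨_, hi⟩ => ⟨embeddingOfMemInter hi⟩⟩

end PathGadgets

theorem stmt_17_general (n : ℕ) (S T : Finset (Fin n)) :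
    let G : SimpleGraph (Fin n × Fin 4) :=
      SimpleGraph.fromEdgeSet
        ({e | ∃ i : Fin n, e = s((i, 0), (i, 1))} ∪
          {e | ∃ i ∈ S, e = s((i, 0), (i, 2))} ∪
          {e | ∃ i ∈ T, e = s((i, 1), (i, 3))})
    Nonempty (SimpleGraph.pathGraph 4 ↪g G) ↔ (S ∩ T).Nonempty := by
  intro G
  change Nonempty (pathGraph 4 ↪g PathGadgets.graph (S : Set (Fin n)) T) ↔ _
  rw [PathGadgets.nonempty_pathGraph_embedding_iff, ← Finset.coe_inter, Finset.coe_nonempty]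

theorem stmt_17 (n : ℕ) (hn : 1 ≤ n) (S T : Finset (Fin n)) :
    let G : SimpleGraph (Fin n × Fin 4) :=
      SimpleGraph.fromEdgeSet
        ({e | ∃ i : Fin n, e = s((i, 0), (i, 1))} ∪
          {e | ∃ i ∈ S, e = s((i, 0), (i, 2))} ∪
          {e | ∃ i ∈ T, e = s((i, 1), (i, 3))})
    Nonempty (SimpleGraph.pathGraph 4 ↪g G) ↔ (S ∩ T).Nonempty :=
  stmt_17_general n S T
end
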